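/- Along any solution $R(t)$ of $\dot R = R\hat\Omega(t) - k R(R^TR-I)$, the quantity $E(t)=\|R(t)^TR(t)-I\|^2$ satisfies $\dot E = -2k\,\operatorname{tr}\big((R^TR-I)(R^TR(R^TR-I)+(R^TR-I)R^TR)\big)$; in particular, $\dot E \le 0$ whenever $R^TR \ge \tfrac{1}{2} I$ (in the positive-semidefinite order). -/

import Mathlib

/-!
Write `P = RᵀR` and `M = P - 1`, so `E = tr (MᵀM)` and `Ė = 2 tr (M Ṁ)` as `M` is symmetric.
Along the flow, `Ṁ = ṘᵀR + RᵀṘ = [P, Ω̂] - k (MP + PM)` because `Ω̂` is skew. The commutator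
drops out of `tr (M [P, Ω̂])` since `M` commutes with `P`, leaving `Ė = -2k tr (M (PM + MP))`.
This trace equals `2 tr (M P M)`, which is nonnegative as soon as `P` is positive semidefinite,
in particular when `P ≥ I/2`.
-/

open Matrix

def hat (Ω : Fin 3 → ℝ) : Matrix (Fin 3) (Fin 3) ℝ :=
  !![0, -Ω 2, Ω 1; Ω 2, 0, -Ω 0; -Ω 1, Ω 0, 0]

lemma hat_transpose (v : Fin 3 → ℝ) : (hat v)ᵀ = -hat v := by
  ext i j
  fin_cases i <;> fin_cases j <;> simp [hat]

section MatrixDeriv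

variable {𝕜 : Type*} [NontriviallyNormedField 𝕜] {m n p : Type*}

def HasMatrixDerivAt (A : 𝕜 → Matrix m n 𝕜) (A' : Matrix m n 𝕜) (t : 𝕜) : Prop :=
  ∀ i j, HasDerivAt (fun s => A s i j) (A' i j) t

variable {A : 𝕜 → Matrix m n 𝕜} {A' : Matrix m n 𝕜} {t : 𝕜}

lemma HasMatrixDerivAt.transpose (hA : HasMatrixDerivAt A A' t) :
    HasMatrixDerivAt (fun s => (A s)ᵀ) A'ᵀ t :=
  fun i j => hA j i

lemma HasMatrixDerivAt.sub_const (hA : HasMatrixDerivAt A A' t) (C : Matrix m n 𝕜) :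
    HasMatrixDerivAt (fun s => A s - C) A' t :=
  fun i j => (hA i j).sub_const (C i j)

lemma HasMatrixDerivAt.mul [Fintype n] {B : 𝕜 → Matrix n p 𝕜} {B' : Matrix n p 𝕜}
    (hA : HasMatrixDerivAt A A' t) (hB : HasMatrixDerivAt B B' t) :
    HasMatrixDerivAt (fun s => A s * B s) (A' * B t + A t * B') t := by
  intro i j
  simpa only [mul_apply, Matrix.add_apply, ← Finset.sum_add_distrib] using
    HasDerivAt.fun_sum (u := Finset.univ) fun l _ => (hA i l).fun_mul (hB l j)

lemma HasMatrixDerivAt.trace [Fintype n] {A : 𝕜 → Matrix n n 𝕜} {A' : Matrix n n 𝕜}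
    (hA : HasMatrixDerivAt A A' t) :
    HasDerivAt (fun s => (A s).trace) A'.trace t :=
  HasDerivAt.fun_sum fun i _ => hA i i

lemma HasMatrixDerivAt.hasDerivAt_trace_transpose_mul_self [Fintype m] [Fintype n]
    (hA : HasMatrixDerivAt A A' t) :
    HasDerivAt (fun s => ((A s)ᵀ * A s).trace) (2 * ((A t)ᵀ * A').trace) t := by
  convert (hA.transpose.mul hA).trace using 1
  rw [trace_add, ← trace_transpose (A'ᵀ * A t), transpose_mul, transpose_transpose, two_mul]

end MatrixDeriv

section TraceAlgebra

variable {n : Type*} [Fintype n]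

lemma trace_mul_commutator_eq_zero {R : Type*} [CommRing R] {M P : Matrix n n R}
    (hMP : Commute M P) (H : Matrix n n R) : (M * (P * H - H * P)).trace = 0 := by
  rw [mul_sub, trace_sub, ← mul_assoc, hMP.eq, mul_assoc, trace_mul_comm P, ← mul_assoc,
    sub_self]

lemma transpose_mul_add_transpose_mul_eq {R : Type*} [CommRing R] (k : R)
    (X H M : Matrix n n R) (hH : Hᵀ = -H) (hM : Mᵀ = M) :
    (X * H - k • (X * M))ᵀ * X + Xᵀ * (X * H - k • (X * M))
      = Xᵀ * X * H - H * (Xᵀ * X) - k • (M * (Xᵀ * X) + Xᵀ * X * M) := by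
  simp only [transpose_sub, transpose_smul, transpose_mul, hH, hM, sub_mul, mul_sub, smul_mul,
    Matrix.mul_smul, neg_mul, mul_assoc, smul_add]
  abel

lemma trace_mul_mul_add_mul_mul_nonneg {P M : Matrix n n ℝ} (hP : P.PosSemidef)
    (hM : M.IsHermitian) : 0 ≤ (M * (P * M + M * P)).trace := by
  have hMPM : 0 ≤ (M * P * M).trace := by
    simpa only [hM.eq] using (hP.mul_mul_conjTranspose_same M).trace_nonneg
  rw [mul_add, trace_add, ← mul_assoc, trace_mul_comm M (M * P)]
  linarith

end TraceAlgebra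

theorem stmt_10_general (k : ℝ) (hk : 0 < k) (Ω : ℝ → Fin 3 → ℝ)
    (R : ℝ → Matrix (Fin 3) (Fin 3) ℝ)
    (hR : ∀ t, ∀ i j, HasDerivAt (fun s => R s i j)
      ((R t * hat (Ω t) - k • (R t * ((R t)ᵀ * R t - 1))) i j) t) :
    ∀ t,
      HasDerivAt (fun s => Matrix.trace (((R s)ᵀ * R s - 1)ᵀ * ((R s)ᵀ * R s - 1)))
        (-(2 * k) * Matrix.trace (((R t)ᵀ * R t - 1) *
          ((R t)ᵀ * R t * ((R t)ᵀ * R t - 1) + ((R t)ᵀ * R t - 1) * ((R t)ᵀ * R t)))) t ∧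
      (Matrix.PosSemidef ((R t)ᵀ * R t - (1 / 2 : ℝ) • 1) →
        -(2 * k) * Matrix.trace (((R t)ᵀ * R t - 1) *
          ((R t)ᵀ * R t * ((R t)ᵀ * R t - 1) + ((R t)ᵀ * R t - 1) * ((R t)ᵀ * R t))) ≤ 0) := by
  intro t
  set P := (R t)ᵀ * R t
  set M := P - 1
  have hM_symm : Mᵀ = M := by
    simp only [M, P, transpose_sub, transpose_mul, transpose_transpose, transpose_one]
  have hM : HasMatrixDerivAt (fun s => (R s)ᵀ * R s - 1)
      (P * hat (Ω t) - hat (Ω t) * P - k • (M * P + P * M)) t := by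
    rw [← transpose_mul_add_transpose_mul_eq k (R t) (hat (Ω t)) M (hat_transpose _) hM_symm]
    have hR_t : HasMatrixDerivAt R _ t := hR t
    exact (hR_t.transpose.mul hR_t).sub_const 1
  refine ⟨hM.hasDerivAt_trace_transpose_mul_self.congr_deriv ?_, fun hPSD => ?_⟩
  · rw [hM_symm, mul_sub, trace_sub, Matrix.mul_smul, trace_smul,
      trace_mul_commutator_eq_zero ((Commute.refl P).sub_left (Commute.one_left P)),
      add_comm (M * P)]
    simp only [smul_eq_mul]
    ring
  · have hP : P.PosSemidef := by
      simpa only [sub_add_cancel] using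
        hPSD.add (PosSemidef.one.smul (by norm_num : (0 : ℝ) ≤ 1 / 2))
    have hM_herm : M.IsHermitian := (conjTranspose_eq_transpose_of_trivial M).trans hM_symm
    nlinarith [trace_mul_mul_add_mul_mul_nonneg hP hM_herm]

/-- Along any solution of `Ṙ = R hat(Ω(t)) - k R (RᵀR - I)`, the quantity
`E(t) = ‖RᵀR - I‖²` (squared Frobenius norm) has derivative
`Ė = -2k tr((RᵀR-I)(RᵀR(RᵀR-I) + (RᵀR-I)RᵀR))`; in particular `Ė ≤ 0` whenever
`RᵀR ≥ (1/2)I` in the positive-semidefinite order. -/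
theorem stmt_10 (k : ℝ) (hk : 0 < k) (Ω : ℝ → Fin 3 → ℝ) (hΩ : Continuous Ω)
    (R : ℝ → Matrix (Fin 3) (Fin 3) ℝ)
    (hR : ∀ t, ∀ i j, HasDerivAt (fun s => R s i j)
      ((R t * hat (Ω t) - k • (R t * ((R t)ᵀ * R t - 1))) i j) t) :
    ∀ t,
      HasDerivAt (fun s => Matrix.trace (((R s)ᵀ * R s - 1)ᵀ * ((R s)ᵀ * R s - 1)))
        (-(2 * k) * Matrix.trace (((R t)ᵀ * R t - 1) *
          ((R t)ᵀ * R t * ((R t)ᵀ * R t - 1) + ((R t)ᵀ * R t - 1) * ((R t)ᵀ * R t)))) t ∧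
      (Matrix.PosSemidef ((R t)ᵀ * R t - (1 / 2 : ℝ) • 1) →
        -(2 * k) * Matrix.trace (((R t)ᵀ * R t - 1) *
          ((R t)ᵀ * R t * ((R t)ᵀ * R t - 1) + ((R t)ᵀ * R t - 1) * ((R t)ᵀ * R t))) ≤ 0) :=
  stmt_10_general k hk Ω R hR
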